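/- Let n be an even natural number. The set of homogeneous polynomials p(v,w) of degree n over ℚ satisfying p(v,w) = -p(-2v - w, v + w) is {0} if n ≡ 0 (mod 4), and is exactly the set of scalar multiples of (v² + 3vw + w²)^(n/2) if n ≡ 2 (mod 4). -/

import Mathlib

open MvPolynomial

/-!
Write `T` for the substitution `p ↦ p(-2v - w, v + w)` and `Q = v² + 3vw + w²`, so that
`T Q = -Q`. A solution `p` of `p = -T p` is fixed by `T²`, which is the substitution
`(v, w) ↦ (3v + w, -v)`. For each real root `μ` of `x² + 3x + 1` the point `(μ, 1)` is
mapped to `-μ • (μ, 1)`, so `p(μ, 1) = (-μ)ⁿ p(μ, 1)`; as `|μ| ≠ 1`, `p(μ, 1) = 0` once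
`n > 0`. Dehomogenizing, `x² + 3x + 1` divides `p(x, 1)`, hence `Q` divides `p`, and the
quotient is again fixed by `T²`. By induction the `T²`-invariant forms of degree `2k` are
the multiples of `Qᵏ`, on which `T` acts by `(-1)ᵏ`.
-/

namespace MvPolynomial

variable {R : Type*} [CommSemiring R] {m n : ℕ}

theorem IsHomogeneous.aeval_smul {σ A : Type*} [CommSemiring A] [Algebra R A]
    {φ : MvPolynomial σ R} (hφ : φ.IsHomogeneous n) (c : A) (x : σ → A) :
    MvPolynomial.aeval (c • x) φ = c ^ n * MvPolynomial.aeval x φ := by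
  rw [φ.as_sum, map_sum, map_sum, Finset.mul_sum]
  refine Finset.sum_congr rfl fun d hd => ?_
  simp only [aeval_monomial, Pi.smul_apply, smul_eq_mul, mul_pow, Finsupp.prod_mul]
  rw [← hφ (mem_support_iff.mp hd), Finsupp.weight_apply]
  simp [Finsupp.sum, Finsupp.prod, Finset.prod_pow_eq_pow_sum]
  ring

theorem IsHomogeneous.natDegree_aeval_X_one_le {φ : MvPolynomial (Fin 2) R}
    (hφ : φ.IsHomogeneous n) :
    (MvPolynomial.aeval ![(Polynomial.X : Polynomial R), 1] φ).natDegree ≤ n := by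
  rw [φ.as_sum, map_sum]
  refine Polynomial.natDegree_sum_le_of_forall_le _ _ fun d hd => ?_
  have hd := hφ (mem_support_iff.mp hd)
  rw [Finsupp.weight_apply, Finsupp.sum_fintype _ _ (by simp), Fin.sum_univ_two] at hd
  rw [aeval_monomial, Finsupp.prod_fintype _ _ (by simp), Fin.prod_univ_two]
  simp only [Matrix.cons_val_zero, Matrix.cons_val_one, one_pow, mul_one]
  exact (Polynomial.natDegree_C_mul_X_pow_le _ _).trans (by simp at hd; omega)

theorem IsHomogeneous.exists_eq_mul_of_aeval_X_one_dvd [NoZeroDivisors R]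
    {q r : MvPolynomial (Fin 2) R} (hq : q.IsHomogeneous (m + n)) (hr : r.IsHomogeneous m)
    (hr_natDegree : (MvPolynomial.aeval ![(Polynomial.X : Polynomial R), 1] r).natDegree = m)
    (hdvd : MvPolynomial.aeval ![(Polynomial.X : Polynomial R), 1] r ∣
      MvPolynomial.aeval ![(Polynomial.X : Polynomial R), 1] q) :
    ∃ s : MvPolynomial (Fin 2) R, s.IsHomogeneous n ∧ q = r * s := by
  obtain ⟨h, hh⟩ := hdvd
  by_cases hq0 : MvPolynomial.aeval ![(Polynomial.X : Polynomial R), 1] q = 0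
  · refine ⟨0, isHomogeneous_zero _ _ _, ?_⟩
    rw [mul_zero, ← Polynomial.homogenize_eq_of_isHomogeneous hq hq0, Polynomial.homogenize_zero]
  have hh_natDegree : h.natDegree ≤ n := by
    rw [hh] at hq0
    have := hq.natDegree_aeval_X_one_le
    rw [hh, Polynomial.natDegree_mul (left_ne_zero_of_mul hq0) (right_ne_zero_of_mul hq0)] at this
    omega
  refine ⟨h.homogenize n, Polynomial.isHomogeneous_homogenize h, ?_⟩
  calc q = (MvPolynomial.aeval ![(Polynomial.X : Polynomial R), 1] r * h).homogenize (m + n) := by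
        rw [← hh, Polynomial.homogenize_eq_of_isHomogeneous hq rfl]
    _ = r * h.homogenize n := by
        rw [Polynomial.homogenize_mul _ _ hr_natDegree.le hh_natDegree,
          Polynomial.homogenize_eq_of_isHomogeneous hr rfl]

end MvPolynomial

namespace Polynomial

theorem X_sq_add_three_mul_X_add_one_dvd {f : ℚ[X]}
    (hf : ∀ μ : ℝ, μ ^ 2 + 3 * μ + 1 = 0 → aeval μ f = 0) :
    X ^ 2 + 3 * X + 1 ∣ f := by
  set μ₁ : ℝ := (-3 + √5) / 2
  set μ₂ : ℝ := (-3 - √5) / 2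
  have h5 : √5 ^ 2 = 5 := Real.sq_sqrt (by norm_num)
  have hsplit :
      (X ^ 2 + 3 * X + 1 : ℚ[X]).map (algebraMap ℚ ℝ) = (X - C μ₁) * (X - C μ₂) := by
    have hsum : μ₁ + μ₂ = -3 := by ring
    have hprod : μ₁ * μ₂ = 1 := by linear_combination -h5 / 4
    calc _ = X ^ 2 - C (μ₁ + μ₂) * X + C (μ₁ * μ₂) := by
          rw [hsum, hprod, C_neg, ← map_ofNat C 3]; simp
      _ = (X - C μ₁) * (X - C μ₂) := by rw [C_add, C_mul]; ring
  have hdvd : ∀ μ : ℝ, μ ^ 2 + 3 * μ + 1 = 0 → X - C μ ∣ f.map (algebraMap ℚ ℝ) :=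
    fun μ hμ => by rw [dvd_iff_isRoot, IsRoot, eval_map_algebraMap, hf μ hμ]
  have hne : μ₁ - μ₂ ≠ 0 := by
    rw [show μ₁ - μ₂ = √5 by ring]
    positivity
  rw [← map_dvd_map' (algebraMap ℚ ℝ), hsplit]
  exact (isCoprime_X_sub_C_of_isUnit_sub hne.isUnit).mul_dvd
    (hdvd μ₁ (by linear_combination h5 / 4)) (hdvd μ₂ (by linear_combination h5 / 4))

end Polynomial

noncomputable def superdivSubst : MvPolynomial (Fin 2) ℚ →ₐ[ℚ] MvPolynomial (Fin 2) ℚ :=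
  aeval ![-2 * X 0 - X 1, X 0 + X 1]

noncomputable def superdivQuadratic : MvPolynomial (Fin 2) ℚ :=
  X 0 ^ 2 + 3 * X 0 * X 1 + X 1 ^ 2

theorem superdivSubst_superdivQuadratic :
    superdivSubst superdivQuadratic = -superdivQuadratic := by
  simp only [superdivSubst, superdivQuadratic, map_add, map_mul, map_pow, map_ofNat, aeval_X,
    Matrix.cons_val_zero, Matrix.cons_val_one]
  ring

theorem superdivSubst_smul_superdivQuadratic_pow (c : ℚ) (k : ℕ) :
    superdivSubst (c • superdivQuadratic ^ k) = (-1) ^ k * c • superdivQuadratic ^ k := by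
  rw [map_smul, map_pow, superdivSubst_superdivQuadratic, neg_pow, mul_smul_comm]

theorem isHomogeneous_superdivQuadratic : superdivQuadratic.IsHomogeneous 2 := by
  have h3 : (3 : MvPolynomial (Fin 2) ℚ).IsHomogeneous 0 := by
    rw [← map_ofNat C 3]
    exact isHomogeneous_C _ _
  exact ((isHomogeneous_X_pow 0 2).add
    ((h3.mul (isHomogeneous_X ℚ 0)).mul (isHomogeneous_X ℚ 1))).add (isHomogeneous_X_pow 1 2)

theorem aeval_X_one_superdivQuadratic :
    aeval ![(Polynomial.X : Polynomial ℚ), 1] superdivQuadratic =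
      Polynomial.X ^ 2 + 3 * Polynomial.X + 1 := by
  simp [superdivQuadratic]

theorem superdivQuadratic_ne_zero : superdivQuadratic ≠ 0 := fun h => by
  simpa [h] using congrArg (Polynomial.eval 0) aeval_X_one_superdivQuadratic

theorem aeval_superdivSubst_superdivSubst {A : Type*} [CommRing A] [Algebra ℚ A]
    (x : Fin 2 → A) (p : MvPolynomial (Fin 2) ℚ) :
    aeval x (superdivSubst (superdivSubst p)) = aeval ![3 * x 0 + x 1, -x 0] p := by
  rw [superdivSubst, comp_aeval_apply, comp_aeval_apply]
  congr 1
  ext i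
  fin_cases i <;> simp <;> ring

theorem abs_ne_one_of_sq_add_three_mul_add_one_eq_zero {μ : ℝ}
    (hμ : μ ^ 2 + 3 * μ + 1 = 0) : |μ| ≠ 1 := by
  intro h
  rcases (abs_eq zero_le_one).mp h with rfl | rfl <;> norm_num at hμ

theorem aeval_root_one_eq_zero_of_superdivSubst_sq_eq {n : ℕ} {p : MvPolynomial (Fin 2) ℚ}
    (hp : p.IsHomogeneous n) (hn : n ≠ 0) (hfix : superdivSubst (superdivSubst p) = p)
    {μ : ℝ} (hμ : μ ^ 2 + 3 * μ + 1 = 0) : aeval ![μ, 1] p = 0 := by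
  have hscale : aeval ![μ, 1] p = (-μ) ^ n * aeval ![μ, 1] p := by
    conv_lhs => rw [← hfix]
    rw [aeval_superdivSubst_superdivSubst, ← hp.aeval_smul]
    congr 1
    ext i
    fin_cases i <;> simp
    linear_combination hμ
  have hpow : (-μ) ^ n ≠ 1 := fun h => abs_ne_one_of_sq_add_three_mul_add_one_eq_zero hμ <| by
    rw [← abs_neg, ← pow_eq_one_iff_of_nonneg (abs_nonneg _) hn, ← abs_pow, h, abs_one]
  have hfactor : (1 - (-μ) ^ n) * aeval ![μ, 1] p = 0 := by linear_combination hscale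
  exact (mul_eq_zero.mp hfactor).resolve_left (sub_ne_zero.mpr hpow.symm)

theorem exists_eq_superdivQuadratic_mul {n : ℕ} {p : MvPolynomial (Fin 2) ℚ}
    (hp : p.IsHomogeneous (2 + n)) (hfix : superdivSubst (superdivSubst p) = p) :
    ∃ h : MvPolynomial (Fin 2) ℚ, h.IsHomogeneous n ∧ p = superdivQuadratic * h := by
  refine hp.exists_eq_mul_of_aeval_X_one_dvd isHomogeneous_superdivQuadratic ?_ ?_
  · rw [aeval_X_one_superdivQuadratic]; compute_degree!
  rw [aeval_X_one_superdivQuadratic]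
  refine Polynomial.X_sq_add_three_mul_X_add_one_dvd fun μ hμ => ?_
  rw [comp_aeval_apply]
  convert aeval_root_one_eq_zero_of_superdivSubst_sq_eq hp (by omega) hfix hμ using 2
  ext i
  fin_cases i <;> simp

theorem eq_smul_superdivQuadratic_pow_of_superdivSubst_sq_eq (k : ℕ)
    {p : MvPolynomial (Fin 2) ℚ} (hp : p.IsHomogeneous (2 * k))
    (hfix : superdivSubst (superdivSubst p) = p) :
    ∃ c : ℚ, p = c • superdivQuadratic ^ k := by
  induction k generalizing p with
  | zero =>
    refine ⟨coeff 0 p, ?_⟩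
    rw [pow_zero, smul_eq_C_mul, mul_one, ← totalDegree_eq_zero_iff_eq_C]
    exact Nat.le_zero.mp hp.totalDegree_le
  | succ k ih =>
    obtain ⟨h, hh, rfl⟩ :=
      exists_eq_superdivQuadratic_mul (by rwa [mul_add, add_comm] at hp) hfix
    have hfix_h : superdivSubst (superdivSubst h) = h := by
      rw [map_mul, map_mul, superdivSubst_superdivQuadratic, map_neg,
        superdivSubst_superdivQuadratic, neg_neg] at hfix
      exact mul_left_cancel₀ superdivQuadratic_ne_zero hfix
    obtain ⟨c, rfl⟩ := ih hh hfix_h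
    exact ⟨c, by rw [mul_smul_comm, pow_succ']⟩

theorem isHomogeneous_and_eq_neg_superdivSubst_iff (k : ℕ) (p : MvPolynomial (Fin 2) ℚ) :
    (p.IsHomogeneous (2 * k) ∧ p = -superdivSubst p) ↔
      ∃ c : ℚ, p = c • superdivQuadratic ^ k ∧ (Even k → c = 0) := by
  constructor
  · rintro ⟨hp, hneg⟩
    have hfix : superdivSubst (superdivSubst p) = p := by
      have hTp : superdivSubst p = -p := neg_eq_iff_eq_neg.mp hneg.symm
      rw [hTp, map_neg, hTp, neg_neg]
    obtain ⟨c, rfl⟩ := eq_smul_superdivQuadratic_pow_of_superdivSubst_sq_eq k hp hfix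
    refine ⟨c, rfl, fun hk => ?_⟩
    rw [superdivSubst_smul_superdivQuadratic_pow, hk.neg_one_pow, one_mul, self_eq_neg,
      smul_eq_zero] at hneg
    exact hneg.resolve_right (pow_ne_zero k superdivQuadratic_ne_zero)
  · rintro ⟨c, rfl, hc⟩
    refine ⟨(homogeneousSubmodule _ _ _).smul_mem c (isHomogeneous_superdivQuadratic.pow k), ?_⟩
    rcases k.even_or_odd with hk | hk
    · simp [hc hk]
    · rw [superdivSubst_smul_superdivQuadratic_pow, hk.neg_one_pow, neg_one_mul, neg_neg]

/-- For even `n`, the set of homogeneous polynomials of degree `n` over `ℚ` satisfying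
`p(v,w) = -p(-2v-w, v+w)` is `{0}` if `n ≡ 0 (mod 4)`, and is exactly the set of scalar
multiples of `(v² + 3vw + w²)^(n/2)` if `n ≡ 2 (mod 4)`. -/
theorem superdiv_poly_classification (n : ℕ) (hn : Even n) :
    (n % 4 = 0 → ∀ p : MvPolynomial (Fin 2) ℚ,
      (p.IsHomogeneous n ∧ p = -(aeval ![-2 * X 0 - X 1, X 0 + X 1] p)) ↔ p = 0) ∧
    (n % 4 = 2 → ∀ p : MvPolynomial (Fin 2) ℚ,
      (p.IsHomogeneous n ∧ p = -(aeval ![-2 * X 0 - X 1, X 0 + X 1] p)) ↔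
        ∃ c : ℚ, p = c • (X 0 ^ 2 + 3 * X 0 * X 1 + X 1 ^ 2) ^ (n / 2)) := by
  obtain ⟨k, rfl⟩ := hn
  rw [← two_mul, Nat.mul_div_cancel_left k two_pos]
  refine ⟨fun h4 p => (isHomogeneous_and_eq_neg_superdivSubst_iff k p).trans ?_,
    fun h4 p => (isHomogeneous_and_eq_neg_superdivSubst_iff k p).trans ?_⟩
  · have hk : Even k := Nat.even_iff.mpr (by omega)
    exact ⟨fun ⟨c, hc, hc0⟩ => by rw [hc, hc0 hk, zero_smul],
      fun hp => ⟨0, by rw [hp, zero_smul], fun _ => rfl⟩⟩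
  · have hk : ¬Even k := Nat.not_even_iff.mpr (by omega)
    exact ⟨fun ⟨c, hc, _⟩ => ⟨c, hc⟩, fun ⟨c, hc⟩ => ⟨c, hc, (absurd · hk)⟩⟩
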